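/- arXiv:1109.6603 — 7 statements merged into one kernel-verified Lean document; each statement's English description precedes it below -/
import Mathlib

section
/- Let b > 0 and u ∈ C¹([0,b], ℂ), and let σ ≥ 0. Then ∫₀ᵇ |u'(t)|² dt + σ|u(0)|² ≥ (1/4)∫₀ᵇ [ (t + 1/(2σ))⁻² + (b + 1/(2σ))⁻² ] |u(t)|² dt + (1/2)(b + 1/(2σ))⁻¹ |u(0)|². (For σ = 0 the terms involving 1/(2σ) are interpreted as vanishing, i.e., the inequality is trivial in that case; one may assume σ > 0.) -/
/-!
Ground-state substitution: for a real weight `g` with `g b = 0`, expanding `‖u' + g u‖² ≥ 0` and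
integrating the derivative of `g ‖u‖²` gives `∫ ‖u'‖² ≥ ∫ (g' - g²) ‖u‖² + g 0 ‖u 0‖²`.
With `c = 1/(2σ)` and `g t = 1/(2(b+c)) - 1/(2(t+c))` one has
`g' - g² = (1/4)((t+c)⁻² + (b+c)⁻²) + (b-t)/(2(b+c)²(t+c))`, and `g 0 + σ = 1/(2(b+c))`.
-/

open MeasureTheory Set intervalIntegral

section GroundState

variable {E : Type*} [NormedAddCommGroup E] [InnerProductSpace ℝ E]

lemma norm_sq_eq_norm_add_smul_sq_sub (x y : E) (r : ℝ) :
    ‖y‖ ^ 2 = ‖y + r • x‖ ^ 2 - 2 * r * inner ℝ x y - r ^ 2 * ‖x‖ ^ 2 := by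
  rw [norm_add_sq_real, norm_smul, real_inner_smul_right, real_inner_comm, Real.norm_eq_abs,
    mul_pow, sq_abs]
  ring

theorem integral_riccati_add_boundary_le_integral_norm_sq {a b : ℝ} (hab : a ≤ b)
    {u u' : ℝ → E} {g g' : ℝ → ℝ}
    (hu : ContinuousOn u (Icc a b)) (hu' : ContinuousOn u' (Icc a b))
    (hg : ContinuousOn g (Icc a b)) (hg' : ContinuousOn g' (Icc a b))
    (hderu : ∀ t ∈ Ioo a b, HasDerivAt u (u' t) t)
    (hderg : ∀ t ∈ Ioo a b, HasDerivAt g (g' t) t) :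
    (∫ t in a..b, (g' t - g t ^ 2) * ‖u t‖ ^ 2) + g a * ‖u a‖ ^ 2 - g b * ‖u b‖ ^ 2 ≤
      ∫ t in a..b, ‖u' t‖ ^ 2 := by
  set D : ℝ → ℝ := fun t => g' t * ‖u t‖ ^ 2 + g t * (2 * inner ℝ (u t) (u' t))
  have hint {f : ℝ → ℝ} (hf : ContinuousOn f (Icc a b)) : IntervalIntegrable f volume a b :=
    hf.intervalIntegrable_of_Icc hab
  have hD : ContinuousOn D (Icc a b) := by fun_prop
  have hFTC : ∫ t in a..b, D t = g b * ‖u b‖ ^ 2 - g a * ‖u a‖ ^ 2 :=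
    integral_eq_sub_of_hasDeriv_right_of_le hab (by fun_prop)
      (fun t ht => ((hderg t ht).mul (hderu t ht).norm_sq).hasDerivWithinAt) (hint hD)
  have hpointwise (t : ℝ) : (g' t - g t ^ 2) * ‖u t‖ ^ 2 - D t ≤ ‖u' t‖ ^ 2 := by
    rw [norm_sq_eq_norm_add_smul_sq_sub (u t) (u' t) (g t)]
    nlinarith [sq_nonneg ‖u' t + g t • u t‖]
  calc (∫ t in a..b, (g' t - g t ^ 2) * ‖u t‖ ^ 2) + g a * ‖u a‖ ^ 2 - g b * ‖u b‖ ^ 2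
      = ∫ t in a..b, ((g' t - g t ^ 2) * ‖u t‖ ^ 2 - D t) := by
        rw [integral_sub (hint (by fun_prop)) (hint hD), hFTC]; ring
    _ ≤ ∫ t in a..b, ‖u' t‖ ^ 2 :=
        integral_mono_on hab (hint (by fun_prop)) (hint (by fun_prop)) fun t _ => hpointwise t

end GroundState

section HardyWeight

variable {b c t : ℝ}

-- `hardyWeight b c = -φ'/φ` for the ground state `φ t = √(t + c) * exp (-t / (2 * (b + c)))`.
noncomputable def hardyWeight (b c t : ℝ) : ℝ := (2 * (b + c))⁻¹ - (2 * (t + c))⁻¹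

lemma hardyWeight_self : hardyWeight b c b = 0 := sub_self _

lemma hasDerivAt_hardyWeight (ht : 0 < t + c) :
    HasDerivAt (hardyWeight b c) (2 * (t + c) ^ 2)⁻¹ t := by
  have hlin : HasDerivAt (fun s => 2 * (s + c)) 2 t := by
    simpa using ((hasDerivAt_id t).add_const c).const_mul 2
  refine ((hlin.inv (by positivity)).const_sub (2 * (b + c))⁻¹).congr_deriv ?_
  field_simp

lemma hardy_le_riccati_hardyWeight (ht : 0 < t + c) (htb : t ≤ b) :
    1 / 4 * (((t + c) ^ 2)⁻¹ + ((b + c) ^ 2)⁻¹) ≤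
      (2 * (t + c) ^ 2)⁻¹ - hardyWeight b c t ^ 2 := by
  have hgap : (2 * (t + c) ^ 2)⁻¹ - hardyWeight b c t ^ 2 -
      1 / 4 * (((t + c) ^ 2)⁻¹ + ((b + c) ^ 2)⁻¹) = (b - t) / (2 * (b + c) ^ 2 * (t + c)) := by
    have : 0 < b + c := by linarith
    unfold hardyWeight
    field_simp
    ring
  have : 0 ≤ (b - t) / (2 * (b + c) ^ 2 * (t + c)) := by
    apply div_nonneg <;> [linarith; positivity]
  linarith

theorem hardy_robin_of_hasDerivAt {E : Type*} [NormedAddCommGroup E] [InnerProductSpace ℝ E]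
    (hb : 0 ≤ b) (hc : 0 < c) {u u' : ℝ → E}
    (hu : ContinuousOn u (Icc 0 b)) (hu' : ContinuousOn u' (Icc 0 b))
    (hderu : ∀ t ∈ Ioo 0 b, HasDerivAt u (u' t) t) :
    1 / 4 * (∫ t in 0..b, (((t + c) ^ 2)⁻¹ + ((b + c) ^ 2)⁻¹) * ‖u t‖ ^ 2)
      + hardyWeight b c 0 * ‖u 0‖ ^ 2 ≤ ∫ t in 0..b, ‖u' t‖ ^ 2 := by
  have hpos : ∀ t ∈ Icc 0 b, 0 < t + c := fun t ht => by linarith [ht.1]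
  have hg : ContinuousOn (hardyWeight b c) (Icc 0 b) := fun t ht =>
    (hasDerivAt_hardyWeight (hpos t ht)).continuousAt.continuousWithinAt
  have hg' : ContinuousOn (fun t => (2 * (t + c) ^ 2)⁻¹) (Icc 0 b) :=
    ContinuousOn.inv₀ (by fun_prop) fun t ht => by have := hpos t ht; positivity
  have hweight : ContinuousOn (fun t => ((t + c) ^ 2)⁻¹ + ((b + c) ^ 2)⁻¹) (Icc 0 b) :=
    (ContinuousOn.inv₀ (by fun_prop) fun t ht => by have := hpos t ht; positivity).add
      continuousOn_const
  have hriccati := integral_riccati_add_boundary_le_integral_norm_sq hb hu hu' hg hg' hderu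
    fun t ht => hasDerivAt_hardyWeight (hpos t (Ioo_subset_Icc_self ht))
  have hcompare : ∫ t in 0..b, 1 / 4 * ((((t + c) ^ 2)⁻¹ + ((b + c) ^ 2)⁻¹) * ‖u t‖ ^ 2) ≤
      ∫ t in 0..b, ((2 * (t + c) ^ 2)⁻¹ - hardyWeight b c t ^ 2) * ‖u t‖ ^ 2 := by
    refine integral_mono_on hb
      ((continuousOn_const.mul (hweight.mul (by fun_prop))).intervalIntegrable_of_Icc hb)
      (((hg'.sub (hg.pow 2)).mul (by fun_prop)).intervalIntegrable_of_Icc hb) fun t ht => ?_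
    rw [← mul_assoc]
    exact mul_le_mul_of_nonneg_right (hardy_le_riccati_hardyWeight (hpos t ht) ht.2)
      (by positivity)
  rw [hardyWeight_self, zero_mul, sub_zero] at hriccati
  rw [← intervalIntegral.integral_const_mul]
  linarith

end HardyWeight

lemma integral_comp_deriv_eq_integral_comp_derivWithin {F G : Type*} [NormedAddCommGroup F]
    [NormedSpace ℝ F] [NormedAddCommGroup G] [NormedSpace ℝ G] (φ : F → G) (u : ℝ → F) {a b : ℝ}
    (hab : a ≤ b) :
    ∫ t in a..b, φ (deriv u t) = ∫ t in a..b, φ (derivWithin u (Icc a b) t) := by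
  simp only [integral_of_le hab, integral_Ioc_eq_integral_Ioo]
  exact setIntegral_congr_fun measurableSet_Ioo fun t ht => by
    rw [derivWithin_of_mem_nhds (Icc_mem_nhds ht.1 ht.2)]

theorem one_dim_robin_hardy (b σ : ℝ) (hb : 0 < b) (hσ : 0 < σ) (u : ℝ → ℂ)
    (hu : ContDiffOn ℝ 1 u (Set.Icc 0 b)) :
    (∫ t in (0:ℝ)..b, ‖deriv u t‖ ^ 2) + σ * ‖u 0‖ ^ 2 ≥
      (1 / 4) * (∫ t in (0:ℝ)..b,
          (((t + 1 / (2 * σ)) ^ 2)⁻¹ + ((b + 1 / (2 * σ)) ^ 2)⁻¹) * ‖u t‖ ^ 2)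
        + (1 / 2) * (b + 1 / (2 * σ))⁻¹ * ‖u 0‖ ^ 2 := by
  set c := 1 / (2 * σ)
  have hderu : ∀ t ∈ Ioo 0 b, HasDerivAt u (derivWithin u (Icc 0 b) t) t := fun t ht => by
    have hnhds := Icc_mem_nhds ht.1 ht.2
    rw [derivWithin_of_mem_nhds hnhds]
    exact ((hu.differentiableOn one_ne_zero t (Ioo_subset_Icc_self ht)).differentiableAt
      hnhds).hasDerivAt
  have hhardy := hardy_robin_of_hasDerivAt hb.le (c := c) (by positivity) hu.continuousOn
    (hu.continuousOn_derivWithin (uniqueDiffOn_Icc hb) le_rfl) hderu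
  have hboundary : hardyWeight b c 0 + σ = 1 / 2 * (b + c)⁻¹ := by
    unfold hardyWeight c
    field_simp
    ring
  rw [integral_comp_deriv_eq_integral_comp_derivWithin (‖·‖ ^ 2) u hb.le, ← hboundary, add_mul]
  linarith
end

section
/- Let b > 0, σ₁ > 0, σ₂ > 0, and u ∈ C¹([0,b], ℂ). Then ∫₀ᵇ |u'(t)|² dt + σ₁|u(0)|² + σ₂|u(b)|² ≥ (1/4)∫₀^{b/2} (t + 1/(2σ₁))⁻² |u(t)|² dt + (1/4)∫_{b/2}^{b} (b − t + 1/(2σ₂))⁻² |u(t)|² dt. -/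
/-!
For a weight `w` on `[a, c]`, `d/dt (w ‖u‖²) = w' ‖u‖² + 2 w ⟪u, u'⟫ ≤ (w' + w²) ‖u‖² + ‖u'‖²`
(expand `‖u' - w u‖² ≥ 0`), so integrating gives
`∫ ‖u'‖² ≥ w(c) ‖u(c)‖² - w(a) ‖u(a)‖² - ∫ (w' + w²) ‖u‖²`.
The weight `w t = 1 / (2 (t - a + 1/(2σ)))` solves the Riccati equation
`w' + w² = -1 / (4 (t - a + 1/(2σ))²)` with `w(a) = σ` and `w(c) > 0`, which gives the one-sided
Robin–Hardy inequality at the left end point; reflecting `t ↦ -t` gives it at the right end point,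
and the two-sided inequality is the sum of the two on `[0, b/2]` and `[b/2, b]`.
-/

open Set MeasureTheory intervalIntegral

section

variable {E : Type*} [NormedAddCommGroup E] [InnerProductSpace ℝ E] {a c : ℝ} {u : ℝ → E}

lemma two_mul_mul_inner_le (r : ℝ) (x y : E) :
    2 * r * inner ℝ x y ≤ r ^ 2 * ‖x‖ ^ 2 + ‖y‖ ^ 2 := by
  have h := norm_sub_sq_real (r • x) y
  rw [inner_smul_left, norm_smul, mul_pow, Real.norm_eq_abs, sq_abs] at h
  simp only [conj_trivial] at h
  nlinarith [sq_nonneg ‖r • x - y‖]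

theorem sub_integral_riccati_le_integral_norm_sq (hac : a ≤ c) {f : ℝ → E}
    {w W : ℝ → ℝ} (hu : ContinuousOn u (Icc a c)) (hf : ContinuousOn f (Icc a c))
    (hw : ContinuousOn w (Icc a c)) (hW : ContinuousOn W (Icc a c))
    (hud : ∀ t ∈ Ioo a c, HasDerivAt u (f t) t) (hwd : ∀ t ∈ Ioo a c, HasDerivAt w (W t) t) :
    w c * ‖u c‖ ^ 2 - w a * ‖u a‖ ^ 2 - ∫ t in a..c, (W t + w t ^ 2) * ‖u t‖ ^ 2 ≤
      ∫ t in a..c, ‖f t‖ ^ 2 := by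
  set G : ℝ → ℝ := fun t => W t * ‖u t‖ ^ 2 + w t * (2 * inner ℝ (u t) (f t))
  have hG : IntervalIntegrable G volume a c :=
    ((hW.mul (hu.norm.pow 2)).add
      (hw.mul (continuousOn_const.mul (hu.inner hf)))).intervalIntegrable_of_Icc hac
  have hriccati : IntervalIntegrable (fun t => (W t + w t ^ 2) * ‖u t‖ ^ 2) volume a c :=
    ((hW.add (hw.pow 2)).mul (hu.norm.pow 2)).intervalIntegrable_of_Icc hac
  have hf2 : IntervalIntegrable (fun t => ‖f t‖ ^ 2) volume a c :=
    (hf.norm.pow 2).intervalIntegrable_of_Icc hac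
  have hFTC : ∫ t in a..c, G t = w c * ‖u c‖ ^ 2 - w a * ‖u a‖ ^ 2 :=
    integral_eq_sub_of_hasDerivAt_of_le hac (hw.mul (hu.norm.pow 2))
      (fun t ht => (hwd t ht).mul (hud t ht).norm_sq) hG
  have hmono : ∫ t in a..c, G t ≤ ∫ t in a..c, ((W t + w t ^ 2) * ‖u t‖ ^ 2 + ‖f t‖ ^ 2) :=
    integral_mono_on hac hG (hriccati.add hf2) fun t _ => by
      have := two_mul_mul_inner_le (w t) (u t) (f t)
      simp only [G]
      linarith
  rw [integral_add hriccati hf2, hFTC] at hmono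
  linarith

lemma eqOn_derivWithin_Icc_deriv (u : ℝ → E) (a c : ℝ) :
    EqOn (derivWithin u (Icc a c)) (deriv u) (Ioo a c) :=
  fun _ ht => derivWithin_of_mem_nhds (Icc_mem_nhds ht.1 ht.2)

lemma ContDiffOn.intervalIntegrable_norm_deriv_sq (hac : a < c)
    (hu : ContDiffOn ℝ 1 u (Icc a c)) :
    IntervalIntegrable (fun t => ‖deriv u t‖ ^ 2) volume a c := by
  refine (((hu.continuousOn_derivWithin (uniqueDiffOn_Icc hac) le_rfl).norm.pow 2
    ).intervalIntegrable_of_Icc hac.le).congr_uIoo ?_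
  rw [uIoo_of_le hac.le]
  exact fun t ht => congrArg (‖·‖ ^ 2) (eqOn_derivWithin_Icc_deriv u a c ht)

theorem ContDiffOn.sub_integral_riccati_le_integral_norm_sq_deriv (hac : a < c)
    (hu : ContDiffOn ℝ 1 u (Icc a c)) {w W : ℝ → ℝ} (hw : ContinuousOn w (Icc a c))
    (hW : ContinuousOn W (Icc a c)) (hwd : ∀ t ∈ Ioo a c, HasDerivAt w (W t) t) :
    w c * ‖u c‖ ^ 2 - w a * ‖u a‖ ^ 2 - ∫ t in a..c, (W t + w t ^ 2) * ‖u t‖ ^ 2 ≤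
      ∫ t in a..c, ‖deriv u t‖ ^ 2 := by
  have hEq := eqOn_derivWithin_Icc_deriv u a c
  have hI : ∫ t in a..c, ‖derivWithin u (Icc a c) t‖ ^ 2 = ∫ t in a..c, ‖deriv u t‖ ^ 2 :=
    integral_congr_Ioo_of_le hac.le fun t ht => congrArg (‖·‖ ^ 2) (hEq ht)
  rw [← hI]
  refine sub_integral_riccati_le_integral_norm_sq hac.le hu.continuousOn
    (hu.continuousOn_derivWithin (uniqueDiffOn_Icc hac) le_rfl) hw hW (fun t ht => ?_) hwd
  rw [hEq ht]
  exact ((hu.differentiableOn one_ne_zero).differentiableAt (Icc_mem_nhds ht.1 ht.2)).hasDerivAt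

theorem robin_hardy_left {σ : ℝ} (hac : a < c) (hσ : 0 < σ) (hu : ContDiffOn ℝ 1 u (Icc a c)) :
    1 / 4 * ∫ t in a..c, ((t - a + 1 / (2 * σ)) ^ 2)⁻¹ * ‖u t‖ ^ 2 ≤
      (∫ t in a..c, ‖deriv u t‖ ^ 2) + σ * ‖u a‖ ^ 2 := by
  set δ := 1 / (2 * σ)
  have hpos : ∀ t ∈ Icc a c, 0 < t - a + δ := fun t ht => by
    have : 0 < δ := by positivity
    linarith [ht.1]
  have hne : ∀ t ∈ Icc a c, t - a + δ ≠ 0 := fun t ht => (hpos t ht).ne'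
  have hne2 : ∀ t ∈ Icc a c, (t - a + δ) ^ 2 ≠ 0 := fun t ht => pow_ne_zero 2 (hne t ht)
  have hbound := hu.sub_integral_riccati_le_integral_norm_sq_deriv hac
    (w := fun t => 1 / 2 * (t - a + δ)⁻¹) (W := fun t => -(1 / 2) * ((t - a + δ) ^ 2)⁻¹)
    (by fun_prop (disch := assumption)) (by fun_prop (disch := assumption)) fun t ht => by
      have := (((hasDerivAt_id' t).sub_const a).add_const δ).inv (hne t (Ioo_subset_Icc_self ht))
      exact (this.const_mul (1 / 2)).congr_deriv (by ring)
  have hriccati : ∫ t in a..c,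
      (-(1 / 2) * ((t - a + δ) ^ 2)⁻¹ + (1 / 2 * (t - a + δ)⁻¹) ^ 2) * ‖u t‖ ^ 2 =
        -(1 / 4) * ∫ t in a..c, ((t - a + δ) ^ 2)⁻¹ * ‖u t‖ ^ 2 := by
    rw [← intervalIntegral.integral_const_mul]
    refine integral_congr fun t _ => ?_
    rw [mul_pow, inv_pow]
    ring
  have hwa : 1 / 2 * (a - a + δ)⁻¹ = σ := by
    simp only [δ]; field_simp; ring
  have hwc : 0 ≤ 1 / 2 * (c - a + δ)⁻¹ * ‖u c‖ ^ 2 := by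
    have := hpos c ⟨hac.le, le_rfl⟩
    positivity
  simp only [hriccati, hwa] at hbound
  linarith

theorem robin_hardy_right {σ : ℝ} (hac : a < c) (hσ : 0 < σ) (hu : ContDiffOn ℝ 1 u (Icc a c)) :
    1 / 4 * ∫ t in a..c, ((c - t + 1 / (2 * σ)) ^ 2)⁻¹ * ‖u t‖ ^ 2 ≤
      (∫ t in a..c, ‖deriv u t‖ ^ 2) + σ * ‖u c‖ ^ 2 := by
  have hv : ContDiffOn ℝ 1 (fun s => u (-s)) (Icc (-c) (-a)) :=
    hu.comp contDiff_neg.contDiffOn fun s hs => ⟨le_neg.mp hs.2, neg_le.mp hs.1⟩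
  have h := robin_hardy_left (neg_lt_neg hac) hσ hv
  have hweight : ∫ t in a..c, ((c - t + 1 / (2 * σ)) ^ 2)⁻¹ * ‖u t‖ ^ 2 =
      ∫ s in -c..-a, ((s - -c + 1 / (2 * σ)) ^ 2)⁻¹ * ‖u (-s)‖ ^ 2 := by
    rw [← integral_comp_neg]
    simp only [neg_neg, sub_neg_eq_add, neg_add_eq_sub]
  have henergy :
      ∫ t in a..c, ‖deriv u t‖ ^ 2 = ∫ s in -c..-a, ‖deriv (fun s => u (-s)) s‖ ^ 2 := by
    rw [← integral_comp_neg]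
    simp only [deriv_comp_neg, norm_neg, neg_neg]
  rw [hweight, henergy]
  simpa only [neg_neg] using h

end

theorem two_sided_robin_hardy (b σ₁ σ₂ : ℝ) (hb : 0 < b) (hσ₁ : 0 < σ₁) (hσ₂ : 0 < σ₂)
    (u : ℝ → ℂ) (hu : ContDiffOn ℝ 1 u (Set.Icc 0 b)) :
    (∫ t in (0:ℝ)..b, ‖deriv u t‖ ^ 2) + σ₁ * ‖u 0‖ ^ 2 + σ₂ * ‖u b‖ ^ 2 ≥
      (1 / 4) * (∫ t in (0:ℝ)..(b / 2), ((t + 1 / (2 * σ₁)) ^ 2)⁻¹ * ‖u t‖ ^ 2)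
        + (1 / 4) * ∫ t in (b / 2)..b, ((b - t + 1 / (2 * σ₂)) ^ 2)⁻¹ * ‖u t‖ ^ 2 := by
  have hmid : 0 < b / 2 := half_pos hb
  have hleft : ContDiffOn ℝ 1 u (Icc 0 (b / 2)) :=
    hu.mono (Icc_subset_Icc_right (half_le_self hb.le))
  have hright : ContDiffOn ℝ 1 u (Icc (b / 2) b) := hu.mono (Icc_subset_Icc_left hmid.le)
  have h₁ := robin_hardy_left hmid hσ₁ hleft
  have h₂ := robin_hardy_right (half_lt_self hb) hσ₂ hright
  simp only [sub_zero] at h₁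
  rw [← integral_add_adjacent_intervals (hleft.intervalIntegrable_norm_deriv_sq hmid)
    (hright.intervalIntegrable_norm_deriv_sq (half_lt_self hb))]
  linarith
end

section
/- Let b > 0, σ < 0 and μ < 0, and suppose −σ = √(−μ)·tanh(b√(−μ)). Then for every u ∈ C¹([0,b], ℝ), ∫₀ᵇ |u'(t)|² dt + σ|u(0)|² ≥ μ ∫₀ᵇ |u(t)|² dt. -/
open Set MeasureTheory intervalIntegral

lemma my_hasDerivAt_tanh (x : ℝ) :
    HasDerivAt Real.tanh (1 - Real.tanh x ^ 2) x := by
  have h : Real.tanh = fun y => Real.sinh y / Real.cosh y :=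
    funext Real.tanh_eq_sinh_div_cosh
  have hc := (Real.cosh_pos x).ne'
  have hd := (Real.hasDerivAt_sinh x).div (Real.hasDerivAt_cosh x) hc
  rw [h]
  refine hd.congr_deriv ?_
  have h1 : Real.cosh x ^ 2 - Real.sinh x ^ 2 = 1 := Real.cosh_sq_sub_sinh_sq x
  simp only []
  field_simp

theorem robin_neumann_lower_bound (b σ μ : ℝ) (hb : 0 < b) (hσ : σ < 0) (hμ : μ < 0)
    (heq : -σ = Real.sqrt (-μ) * Real.tanh (b * Real.sqrt (-μ)))
    (u : ℝ → ℝ) (hu : ContDiffOn ℝ 1 u (Set.Icc 0 b)) :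
    (∫ t in (0:ℝ)..b, |deriv u t| ^ 2) + σ * |u 0| ^ 2 ≥
      μ * ∫ t in (0:ℝ)..b, |u t| ^ 2 := by
  set k := Real.sqrt (-μ) with hkdef
  have hk0 : 0 < k := Real.sqrt_pos.mpr (by linarith)
  have hμk : μ = -k ^ 2 := by
    rw [hkdef, Real.sq_sqrt (by linarith : (0:ℝ) ≤ -μ)]; ring
  set g : ℝ → ℝ := fun t => -k * Real.tanh (k * (b - t)) with hgdef
  have hg : ∀ t, HasDerivAt g (k ^ 2 - g t ^ 2) t := by
    intro t
    have h1 : HasDerivAt (fun t : ℝ => k * (b - t)) (-k) t := by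
      simpa using ((hasDerivAt_id t).const_sub b).const_mul k
    have h2 := (my_hasDerivAt_tanh (k * (b - t))).comp t h1
    have h3 := h2.const_mul (-k)
    refine h3.congr_deriv ?_
    simp only [hgdef]
    ring
  have hg0 : g 0 = σ := by
    simp only [hgdef, sub_zero]
    rw [mul_comm k b]
    linarith
  have hgb : g b = 0 := by simp [hgdef]
  have htanhd : Differentiable ℝ Real.tanh := fun x => (my_hasDerivAt_tanh x).differentiableAt
  have htanhc : Continuous Real.tanh := htanhd.continuous
  have hgc : Continuous g :=
    continuous_const.mul (htanhc.comp (continuous_const.mul (continuous_const.sub continuous_id)))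
  have hucont : ContinuousOn u (Icc 0 b) := hu.continuousOn
  set v := derivWithin u (Set.Icc 0 b) with hvdef
  have hvcont : ContinuousOn v (Icc 0 b) :=
    hu.continuousOn_derivWithin (uniqueDiffOn_Icc hb) le_rfl
  have hde : ∀ t ∈ Ioo 0 b, HasDerivAt u (v t) t := by
    intro t ht
    have hmem : Icc 0 b ∈ nhds t := Icc_mem_nhds ht.1 ht.2
    exact ((hu.differentiableOn one_ne_zero t (Ioo_subset_Icc_self ht)).hasDerivWithinAt).hasDerivAt
      hmem
  -- FTC for F t = g t * u t ^ 2
  have hFcont : ContinuousOn (fun t => g t * u t ^ 2) (Icc 0 b) :=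
    (hgc.continuousOn).mul (hucont.pow 2)
  have hintegrand_cont :
      ContinuousOn (fun t => (k ^ 2 - g t ^ 2) * u t ^ 2 + 2 * g t * u t * v t) (Icc 0 b) := by
    apply ContinuousOn.add
    · exact ((continuousOn_const.sub ((hgc.continuousOn).pow 2)).mul (hucont.pow 2))
    · exact (((continuousOn_const.mul hgc.continuousOn).mul hucont).mul hvcont)
  have hint1 : IntervalIntegrable
      (fun t => (k ^ 2 - g t ^ 2) * u t ^ 2 + 2 * g t * u t * v t) volume 0 b :=
    ContinuousOn.intervalIntegrable (by rw [uIcc_of_le hb.le]; exact hintegrand_cont)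
  have hftc : (∫ t in (0:ℝ)..b, ((k ^ 2 - g t ^ 2) * u t ^ 2 + 2 * g t * u t * v t))
      = -(σ * u 0 ^ 2) := by
    have hD : ∀ t ∈ Ioo 0 b, HasDerivWithinAt (fun t => g t * u t ^ 2)
        ((k ^ 2 - g t ^ 2) * u t ^ 2 + 2 * g t * u t * v t) (Ioi t) t := by
      intro t ht
      have h := (hg t).mul (((hde t ht).pow 2))
      have : HasDerivAt (fun t => g t * u t ^ 2)
          ((k ^ 2 - g t ^ 2) * u t ^ 2 + 2 * g t * u t * v t) t := by
        refine h.congr_deriv ?_; simp only [Pi.pow_apply]; ring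
      exact this.hasDerivWithinAt
    have := intervalIntegral.integral_eq_sub_of_hasDeriv_right_of_le hb.le hFcont hD hint1
    rw [this, hgb, hg0]; ring
  -- integrability of pieces
  have hi_v2 : IntervalIntegrable (fun t => v t ^ 2) volume 0 b :=
    ContinuousOn.intervalIntegrable (by rw [uIcc_of_le hb.le]; exact hvcont.pow 2)
  have hi_u2 : IntervalIntegrable (fun t => u t ^ 2) volume 0 b :=
    ContinuousOn.intervalIntegrable (by rw [uIcc_of_le hb.le]; exact hucont.pow 2)
  have hi_sum : IntervalIntegrable (fun t => v t ^ 2 + k ^ 2 * u t ^ 2) volume 0 b :=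
    hi_v2.add (hi_u2.const_mul _)
  -- key identity
  have hkey : (∫ t in (0:ℝ)..b, (v t - g t * u t) ^ 2)
      = (∫ t in (0:ℝ)..b, v t ^ 2) + σ * u 0 ^ 2 + k ^ 2 * ∫ t in (0:ℝ)..b, u t ^ 2 := by
    have hpt : ∀ t, (v t - g t * u t) ^ 2
        = (v t ^ 2 + k ^ 2 * u t ^ 2)
          - ((k ^ 2 - g t ^ 2) * u t ^ 2 + 2 * g t * u t * v t) := by
      intro t; ring
    calc (∫ t in (0:ℝ)..b, (v t - g t * u t) ^ 2)
        = ∫ t in (0:ℝ)..b, ((v t ^ 2 + k ^ 2 * u t ^ 2)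
            - ((k ^ 2 - g t ^ 2) * u t ^ 2 + 2 * g t * u t * v t)) := by
          simp only [hpt]
      _ = (∫ t in (0:ℝ)..b, (v t ^ 2 + k ^ 2 * u t ^ 2))
            - ∫ t in (0:ℝ)..b, ((k ^ 2 - g t ^ 2) * u t ^ 2 + 2 * g t * u t * v t) :=
          intervalIntegral.integral_sub hi_sum hint1
      _ = ((∫ t in (0:ℝ)..b, v t ^ 2) + k ^ 2 * ∫ t in (0:ℝ)..b, u t ^ 2)
            - (-(σ * u 0 ^ 2)) := by
          rw [hftc, intervalIntegral.integral_add hi_v2 (hi_u2.const_mul _),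
            intervalIntegral.integral_const_mul]
      _ = _ := by ring
  have hnn : (0:ℝ) ≤ ∫ t in (0:ℝ)..b, (v t - g t * u t) ^ 2 :=
    intervalIntegral.integral_nonneg hb.le (fun t _ => sq_nonneg _)
  -- rewrite the goal integrals
  have hae : ∀ᵐ (x : ℝ) ∂volume, x ≠ b := by
    rw [MeasureTheory.ae_iff]
    have : {a : ℝ | ¬a ≠ b} = {b} := by ext x; simp
    rw [this]
    exact MeasureTheory.measure_singleton b
  have hgoal1 : (∫ t in (0:ℝ)..b, |deriv u t| ^ 2) = ∫ t in (0:ℝ)..b, v t ^ 2 := by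
    apply intervalIntegral.integral_congr_ae
    filter_upwards [hae] with x hx hmem
    rw [uIoc_of_le hb.le] at hmem
    have hxo : x ∈ Ioo 0 b := ⟨hmem.1, lt_of_le_of_ne hmem.2 hx⟩
    rw [sq_abs, (hde x hxo).deriv]
  have hgoal2 : (∫ t in (0:ℝ)..b, |u t| ^ 2) = ∫ t in (0:ℝ)..b, u t ^ 2 := by
    simp [sq_abs]
  rw [hgoal1, hgoal2, sq_abs, hμk]
  nlinarith [hnn, hkey]
end

section
/- Let b > 0 and u ∈ C¹([0,b], ℂ) with u(0) = 0. Then ∫₀ᵇ |u'(t)|² dt ≥ (1/4)∫₀ᵇ [ t⁻² + b⁻² ] |u(t)|² dt. -/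
/-!
Ground-state substitution: for any `c`, expanding `0 ≤ ‖u' - c u‖²` and integrating
`(c ‖u‖²)' = c' ‖u‖² + 2 c ⟪u, u'⟫` gives `∫ ‖u'‖² ≥ -∫ (c' + c²) ‖u‖²` up to boundary terms.
Taking `c = φ'/φ` with `φ t = √t · exp (-t² / (4 b²))` gives
`-(c' + c²) = 1/(4t²) + 1/b² - t²/(4b⁴) ≥ (t⁻² + b⁻²)/4` on `(0, b]`. The boundary terms vanish:
`c b = 0`, and `c t ‖u t‖² = O(t)` because `‖u t‖ = O(t)`.
-/

open MeasureTheory Set Filter Topology intervalIntegral RealInnerProductSpace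

section Riccati

variable {E : Type*} [NormedAddCommGroup E] [InnerProductSpace ℝ E]

lemma mul_norm_sq_add_mul_inner_le_of_riccati {u v : E} {c c' w : ℝ}
    (h : c' + c ^ 2 + w ≤ 0) :
    c' * ‖u‖ ^ 2 + c * (2 * ⟪u, v⟫) ≤ ‖v‖ ^ 2 - w * ‖u‖ ^ 2 := by
  have hsq : 0 ≤ ‖v - c • u‖ ^ 2 := sq_nonneg _
  rw [norm_sub_sq_real, inner_smul_right, norm_smul, mul_pow, Real.norm_eq_abs, sq_abs,
    real_inner_comm] at hsq
  nlinarith [mul_nonpos_of_nonpos_of_nonneg h (sq_nonneg ‖u‖)]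

theorem sub_le_integral_of_riccati {a b : ℝ} (hab : a ≤ b) {u u' : ℝ → E} {c c' w : ℝ → ℝ}
    (hcont : ContinuousOn (fun t ↦ c t * ‖u t‖ ^ 2) (Icc a b))
    (hu : ∀ t ∈ Ioo a b, HasDerivAt u (u' t) t) (hc : ∀ t ∈ Ioo a b, HasDerivAt c (c' t) t)
    (hric : ∀ t ∈ Ioo a b, c' t + c t ^ 2 + w t ≤ 0)
    (hu' : IntervalIntegrable (fun t ↦ ‖u' t‖ ^ 2) volume a b)
    (hw : IntervalIntegrable (fun t ↦ w t * ‖u t‖ ^ 2) volume a b) :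
    c b * ‖u b‖ ^ 2 - c a * ‖u a‖ ^ 2 ≤
      (∫ t in a..b, ‖u' t‖ ^ 2) - ∫ t in a..b, w t * ‖u t‖ ^ 2 := by
  rw [← integral_sub hu' hw]
  refine sub_le_integral_of_hasDeriv_right_of_le hab hcont
    (g' := fun t ↦ c' t * ‖u t‖ ^ 2 + c t * (2 * ⟪u t, u' t⟫))
    (fun t ht ↦ ((hc t ht).mul (hu t ht).norm_sq).hasDerivWithinAt)
    ((intervalIntegrable_iff_integrableOn_Icc_of_le hab).mp (hu'.sub hw))
    (fun t ht ↦ mul_norm_sq_add_mul_inner_le_of_riccati (hric t ht))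

end Riccati

noncomputable def hardyLogDeriv (b t : ℝ) : ℝ := (2 * t)⁻¹ - t / (2 * b ^ 2)

lemma hardyLogDeriv_self {b : ℝ} (hb : b ≠ 0) : hardyLogDeriv b b = 0 := by
  unfold hardyLogDeriv
  field_simp
  ring

lemma hardyLogDeriv_mul_sq (b t : ℝ) : hardyLogDeriv b t * t ^ 2 = t / 2 - t ^ 3 / (2 * b ^ 2) := by
  rcases eq_or_ne t 0 with rfl | ht
  · simp [hardyLogDeriv]
  · unfold hardyLogDeriv
    field_simp

lemma hasDerivAt_hardyLogDeriv (b : ℝ) {t : ℝ} (ht : t ≠ 0) :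
    HasDerivAt (hardyLogDeriv b) (-(2 * t ^ 2)⁻¹ - (2 * b ^ 2)⁻¹) t := by
  have h : HasDerivAt (fun s ↦ (2 * s)⁻¹ - s / (2 * b ^ 2))
      (-(2 * 1) / (2 * t) ^ 2 - 1 / (2 * b ^ 2)) t :=
    (((hasDerivAt_id' t).const_mul 2).inv (by simpa using ht)).sub
      ((hasDerivAt_id' t).div_const (2 * b ^ 2))
  exact h.congr_deriv (by field_simp)

lemma hardyLogDeriv_riccati_le {b t : ℝ} (hb : b ≠ 0) (ht : t ≠ 0) (htb : t ^ 2 ≤ 3 * b ^ 2) :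
    (-(2 * t ^ 2)⁻¹ - (2 * b ^ 2)⁻¹) + hardyLogDeriv b t ^ 2 +
      1 / 4 * ((t ^ 2)⁻¹ + (b ^ 2)⁻¹) ≤ 0 := by
  have h : (-(2 * t ^ 2)⁻¹ - (2 * b ^ 2)⁻¹) + hardyLogDeriv b t ^ 2 +
      1 / 4 * ((t ^ 2)⁻¹ + (b ^ 2)⁻¹) = (t ^ 2 - 3 * b ^ 2) / (4 * b ^ 4) := by
    unfold hardyLogDeriv
    field_simp
    ring
  rw [h]
  exact div_nonpos_of_nonpos_of_nonneg (by linarith) (by positivity)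

section LinearVanishing

variable {F : Type*} [NormedAddCommGroup F]

lemma continuousOn_hardyLogDeriv_mul_norm_sq {u : ℝ → F} {b C : ℝ}
    (hu : ContinuousOn u (Icc 0 b)) (hC : ∀ t ∈ Icc 0 b, ‖u t‖ ≤ C * t) :
    ContinuousOn (fun t ↦ hardyLogDeriv b t * ‖u t‖ ^ 2) (Icc 0 b) := by
  intro t ht
  rcases ht.1.eq_or_lt with rfl | ht0
  · have hbound : ∀ s ∈ Icc 0 b,
        ‖hardyLogDeriv b s * ‖u s‖ ^ 2‖ ≤ C ^ 2 * |s / 2 - s ^ 3 / (2 * b ^ 2)| := by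
      intro s hs
      have hus : ‖u s‖ ^ 2 ≤ (C * s) ^ 2 := pow_le_pow_left₀ (norm_nonneg _) (hC s hs) 2
      calc ‖hardyLogDeriv b s * ‖u s‖ ^ 2‖ = |hardyLogDeriv b s| * ‖u s‖ ^ 2 := by
            rw [norm_mul, Real.norm_eq_abs, norm_pow, norm_norm]
        _ ≤ |hardyLogDeriv b s| * (C * s) ^ 2 := by gcongr
        _ = C ^ 2 * |s / 2 - s ^ 3 / (2 * b ^ 2)| := by
            rw [← hardyLogDeriv_mul_sq, abs_mul, abs_of_nonneg (sq_nonneg s)]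
            ring
    have hlim : Tendsto (fun s ↦ C ^ 2 * |s / 2 - s ^ 3 / (2 * b ^ 2)|) (𝓝[Icc 0 b] 0) (𝓝 0) := by
      have h : Continuous (fun s ↦ C ^ 2 * |s / 2 - s ^ 3 / (2 * b ^ 2)|) := by fun_prop
      simpa using (h.tendsto 0).mono_left nhdsWithin_le_nhds
    have hu0 : u 0 = 0 := norm_le_zero_iff.mp (by simpa using hC 0 ht)
    rw [ContinuousWithinAt, hu0, norm_zero, zero_pow two_ne_zero, mul_zero]
    exact squeeze_zero_norm' (eventually_nhdsWithin_of_forall hbound) hlim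
  · exact (hasDerivAt_hardyLogDeriv b ht0.ne').continuousAt.continuousWithinAt.mul
      ((hu t ht).norm.pow 2)

lemma intervalIntegrable_inv_sq_add_mul_norm_sq {u : ℝ → F} {b C : ℝ} (hb : 0 ≤ b)
    (hu : ContinuousOn u (Icc 0 b)) (hC : ∀ t ∈ Icc 0 b, ‖u t‖ ≤ C * t) (k : ℝ) :
    IntervalIntegrable (fun t ↦ ((t ^ 2)⁻¹ + k) * ‖u t‖ ^ 2) volume 0 b := by
  have hcont : ContinuousOn (fun t ↦ ((t ^ 2)⁻¹ + k) * ‖u t‖ ^ 2) (Ioc 0 b) :=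
    (((continuousOn_id.pow 2).inv₀ fun t ht ↦ pow_ne_zero 2 ht.1.ne').add continuousOn_const).mul
      ((hu.mono Ioc_subset_Icc_self).norm.pow 2)
  have hg : Continuous (fun t : ℝ ↦ C ^ 2 * |1 + k * t ^ 2|) := by fun_prop
  refine (hg.intervalIntegrable 0 b).mono_fun' ?_ ?_
  · rw [uIoc_of_le hb]
    exact hcont.aestronglyMeasurable measurableSet_Ioc
  · rw [uIoc_of_le hb]
    refine ae_restrict_of_forall_mem measurableSet_Ioc fun t ht ↦ ?_
    have hut : ‖u t‖ ^ 2 ≤ (C * t) ^ 2 :=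
      pow_le_pow_left₀ (norm_nonneg _) (hC t (Ioc_subset_Icc_self ht)) 2
    calc ‖((t ^ 2)⁻¹ + k) * ‖u t‖ ^ 2‖ = |(t ^ 2)⁻¹ + k| * ‖u t‖ ^ 2 := by
          rw [norm_mul, Real.norm_eq_abs, norm_pow, norm_norm]
      _ ≤ |(t ^ 2)⁻¹ + k| * (C * t) ^ 2 := by gcongr
      _ = C ^ 2 * |((t ^ 2)⁻¹ + k) * t ^ 2| := by
          rw [abs_mul, abs_of_nonneg (sq_nonneg t)]
          ring
      _ = C ^ 2 * |1 + k * t ^ 2| := by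
          rw [add_mul, inv_mul_cancel₀ (pow_ne_zero 2 ht.1.ne'), mul_comm k]

end LinearVanishing

section Smooth

variable {F : Type*} [NormedAddCommGroup F] [NormedSpace ℝ F]

lemma ContDiffOn.exists_norm_le_mul_of_apply_zero {u : ℝ → F} {b : ℝ} (hb : 0 < b)
    (hu : ContDiffOn ℝ 1 u (Icc 0 b)) (hu0 : u 0 = 0) : ∃ C, ∀ t ∈ Icc 0 b, ‖u t‖ ≤ C * t := by
  obtain ⟨C, hC⟩ := isCompact_Icc.exists_bound_of_continuousOn
    (hu.continuousOn_derivWithin (uniqueDiffOn_Icc hb) le_rfl)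
  refine ⟨C, fun t ht ↦ ?_⟩
  simpa [hu0, abs_of_nonneg ht.1] using (convex_Icc 0 b).norm_image_sub_le_of_norm_derivWithin_le
    (hu.differentiableOn one_ne_zero) hC (left_mem_Icc.2 hb.le) ht

lemma ContDiffOn.intervalIntegrable_comp_deriv {G : Type*} [NormedAddCommGroup G] {u : ℝ → F}
    {a b : ℝ} (hab : a < b) (hu : ContDiffOn ℝ 1 u (Icc a b)) {g : F → G} (hg : Continuous g) :
    IntervalIntegrable (fun t ↦ g (deriv u t)) volume a b := by
  have hcont : ContinuousOn (derivWithin u (Icc a b)) (Icc a b) :=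
    hu.continuousOn_derivWithin (uniqueDiffOn_Icc hab) le_rfl
  refine ((hg.comp_continuousOn hcont).intervalIntegrable_of_Icc hab.le).congr_uIoo ?_
  rw [uIoo_of_le hab.le]
  intro t ht
  simp only [Function.comp_apply, derivWithin_of_mem_nhds (Icc_mem_nhds ht.1 ht.2)]

end Smooth

theorem dirichlet_limit_hardy (b : ℝ) (hb : 0 < b) (u : ℝ → ℂ)
    (hu : ContDiffOn ℝ 1 u (Set.Icc 0 b)) (hu0 : u 0 = 0) :
    (∫ t in (0:ℝ)..b, ‖deriv u t‖ ^ 2) ≥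
      (1 / 4) * ∫ t in (0:ℝ)..b, ((t ^ 2)⁻¹ + (b ^ 2)⁻¹) * ‖u t‖ ^ 2 := by
  obtain ⟨C, hC⟩ := hu.exists_norm_le_mul_of_apply_zero hb hu0
  have hderiv : ∀ t ∈ Ioo 0 b, HasDerivAt u (deriv u t) t := fun t ht ↦
    ((hu.differentiableOn one_ne_zero t (Ioo_subset_Icc_self ht)).differentiableAt
      (Icc_mem_nhds ht.1 ht.2)).hasDerivAt
  have hweight := (intervalIntegrable_inv_sq_add_mul_norm_sq hb.le hu.continuousOn hC
    (b ^ 2)⁻¹).const_mul (1 / 4)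
  have key := sub_le_integral_of_riccati hb.le
    (continuousOn_hardyLogDeriv_mul_norm_sq hu.continuousOn hC) hderiv
    (fun t ht ↦ hasDerivAt_hardyLogDeriv b ht.1.ne')
    (fun t ht ↦ hardyLogDeriv_riccati_le hb.ne' ht.1.ne' (by nlinarith [ht.1, ht.2]))
    (hu.intervalIntegrable_comp_deriv hb (continuous_norm.pow 2))
    (by simpa only [mul_assoc] using hweight)
  rw [hardyLogDeriv_self hb.ne', hu0, norm_zero, zero_pow two_ne_zero, zero_mul,
    mul_zero, sub_zero] at key
  simp only [mul_assoc, intervalIntegral.integral_const_mul] at key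
  linarith
end

section
/- Let b > 0, σ > 0, and u ∈ C¹([0,b], ℂ). Then ∫₀ᵇ |u'(t)|² dt + σ|u(0)|² + σ|u(b)|² ≥ (1/2)(b/2 + 1/(2σ))⁻² ∫₀ᵇ |u(t)|² dt. -/
/-!
On `[0, m]`, write `u t = u 0 + ∫₀ᵗ u'`. The weighted Cauchy–Schwarz inequality
`(a + X)² ≤ (t + c) (a² / c + X² / t)` together with `X² ≤ t ∫₀ᵗ ‖u'‖²` gives
`‖u t‖² ≤ (t + c) (‖u 0‖² / c + ∫₀ᵐ ‖u'‖²)`, and integrating in `t` produces the factor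
`(m + c)² / 2`. Using this on `[0, b/2]` from the left end and, after the reflection `t ↦ b - t`,
on `[b/2, b]` from the right end, with `c = 1 / (2σ)`, bounds `∫₀ᵇ ‖u‖²` by
`(b/2 + c)² / 2 · (2σ (‖u 0‖² + ‖u b‖²) + ∫₀ᵇ ‖u'‖²)`.
-/

open intervalIntegral Set
open MeasureTheory (volume)

theorem sq_intervalIntegral_le_mul {f : ℝ → ℝ} {a b : ℝ} (hab : a ≤ b)
    (hf : IntervalIntegrable f volume a b) (hf2 : IntervalIntegrable (fun x ↦ f x ^ 2) volume a b) :
    (∫ x in a..b, f x) ^ 2 ≤ (b - a) * ∫ x in a..b, f x ^ 2 := by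
  set X := ∫ x in a..b, f x
  have hvar : ∫ x in a..b, ((b - a) * f x - X) ^ 2
      = (b - a) * ((b - a) * (∫ x in a..b, f x ^ 2) - X ^ 2) := by
    simp_rw [show ∀ x, ((b - a) * f x - X) ^ 2
      = (b - a) ^ 2 * f x ^ 2 - 2 * (b - a) * X * f x + X ^ 2 from fun x ↦ by ring]
    rw [integral_add ((hf2.const_mul _).sub (hf.const_mul _)) intervalIntegrable_const,
      integral_sub (hf2.const_mul _) (hf.const_mul _), intervalIntegral.integral_const_mul,
      intervalIntegral.integral_const_mul, intervalIntegral.integral_const, smul_eq_mul]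
    ring
  have h0 : 0 ≤ ∫ x in a..b, ((b - a) * f x - X) ^ 2 := integral_nonneg hab fun _ _ ↦ sq_nonneg _
  rcases hab.eq_or_lt with rfl | hlt
  · simp [X]
  · rw [hvar] at h0
    exact sub_nonneg.1 (nonneg_of_mul_nonneg_right h0 (sub_pos.2 hlt))

theorem sq_add_le_mul_of_sq_le_mul {a X t c J : ℝ} (ht : 0 ≤ t) (hc : 0 < c) (hJ : 0 ≤ J)
    (h : X ^ 2 ≤ t * J) : (a + X) ^ 2 ≤ (t + c) * (a ^ 2 / c + J) := by
  have hcross : 2 * a * X * c ≤ a ^ 2 * t + c ^ 2 * J := by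
    rcases ht.eq_or_lt with rfl | htpos
    · obtain rfl : X = 0 := by nlinarith
      simpa using mul_nonneg (sq_nonneg c) hJ
    · refine le_of_mul_le_mul_left ?_ htpos
      nlinarith [sq_nonneg (a * t - c * X)]
  have hexpand : (t + c) * (a ^ 2 / c + J) = a ^ 2 + t * J + (a ^ 2 * t + c ^ 2 * J) / c := by
    field_simp
    ring
  have hcross_div : 2 * a * X ≤ (a ^ 2 * t + c ^ 2 * J) / c := by
    rw [le_div_iff₀ hc]
    linarith
  rw [hexpand]
  nlinarith

section

variable {E : Type*} [NormedAddCommGroup E] [NormedSpace ℝ E] [CompleteSpace E] {u u' : ℝ → E}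

theorem norm_sq_le_of_hasDerivAt {m c t : ℝ} (hc : 0 < c) (hu : ContinuousOn u (Icc 0 m))
    (hu' : ContinuousOn u' (Icc 0 m)) (hderiv : ∀ s ∈ Ioo 0 m, HasDerivAt u (u' s) s)
    (ht : t ∈ Icc 0 m) :
    ‖u t‖ ^ 2 ≤ (t + c) * (‖u 0‖ ^ 2 / c + ∫ s in 0..t, ‖u' s‖ ^ 2) := by
  have hsub : uIcc 0 t ⊆ Icc 0 m := by
    rw [uIcc_of_le ht.1]
    exact Icc_subset_Icc_right ht.2
  have hu't : ContinuousOn u' (uIcc 0 t) := hu'.mono hsub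
  have hftc : ∫ s in 0..t, u' s = u t - u 0 :=
    integral_eq_sub_of_hasDerivAt_of_le ht.1 (hu.mono (uIcc_of_le ht.1 ▸ hsub))
      (fun s hs ↦ hderiv s ⟨hs.1, hs.2.trans_le ht.2⟩) hu't.intervalIntegrable
  have hnorm : ‖u t‖ ≤ ‖u 0‖ + ∫ s in 0..t, ‖u' s‖ :=
    calc ‖u t‖ = ‖u 0 + ∫ s in 0..t, u' s‖ := by rw [hftc, add_sub_cancel]
      _ ≤ ‖u 0‖ + ∫ s in 0..t, ‖u' s‖ :=
        (norm_add_le _ _).trans (add_le_add_right (norm_integral_le_integral_norm ht.1) _)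
  have hCS : (∫ s in 0..t, ‖u' s‖) ^ 2 ≤ t * ∫ s in 0..t, ‖u' s‖ ^ 2 := by
    simpa using sq_intervalIntegral_le_mul ht.1 hu't.norm.intervalIntegrable
      (hu't.norm.pow 2).intervalIntegrable
  calc ‖u t‖ ^ 2 ≤ (‖u 0‖ + ∫ s in 0..t, ‖u' s‖) ^ 2 := pow_le_pow_left₀ (norm_nonneg _) hnorm 2
    _ ≤ _ := sq_add_le_mul_of_sq_le_mul ht.1 hc (integral_nonneg ht.1 fun _ _ ↦ by positivity) hCS

theorem integral_norm_sq_le_of_hasDerivAt {m c : ℝ} (hm : 0 ≤ m) (hc : 0 < c)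
    (hu : ContinuousOn u (Icc 0 m)) (hu' : ContinuousOn u' (Icc 0 m))
    (hderiv : ∀ t ∈ Ioo 0 m, HasDerivAt u (u' t) t) :
    ∫ t in 0..m, ‖u t‖ ^ 2 ≤ (m + c) ^ 2 / 2 * (‖u 0‖ ^ 2 / c + ∫ t in 0..m, ‖u' t‖ ^ 2) := by
  set C := ‖u 0‖ ^ 2 / c + ∫ t in 0..m, ‖u' t‖ ^ 2
  have hu'm : ContinuousOn u' (uIcc 0 m) := uIcc_of_le hm ▸ hu'
  have hpointwise : ∀ t ∈ Icc 0 m, ‖u t‖ ^ 2 ≤ (t + c) * C := fun t ht ↦ by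
    refine (norm_sq_le_of_hasDerivAt hc hu hu' hderiv ht).trans <|
      mul_le_mul_of_nonneg_left (add_le_add_right ?_ _) (by linarith [ht.1])
    exact integral_mono_interval le_rfl ht.1 ht.2 (.of_forall fun _ ↦ sq_nonneg _)
      ((hu'm.norm.pow 2).intervalIntegrable (μ := volume))
  have hC : 0 ≤ C := by
    have : 0 ≤ ∫ t in 0..m, ‖u' t‖ ^ 2 := integral_nonneg hm fun _ _ ↦ sq_nonneg _
    positivity
  calc ∫ t in 0..m, ‖u t‖ ^ 2 ≤ ∫ t in 0..m, (t + c) * C :=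
        integral_mono_on hm ((uIcc_of_le hm ▸ hu).norm.pow 2).intervalIntegrable
          ((by fun_prop : Continuous fun t : ℝ ↦ (t + c) * C).intervalIntegrable _ _) hpointwise
    _ = (m ^ 2 / 2 + c * m) * C := by
        simp only [integral_mul_const, integral_add intervalIntegrable_id intervalIntegrable_const,
          integral_id, intervalIntegral.integral_const, smul_eq_mul]
        ring
    _ ≤ (m + c) ^ 2 / 2 * C := by gcongr; nlinarith [sq_nonneg c]

theorem integral_norm_sq_le_of_hasDerivAt_rev {x y c : ℝ} (hxy : x ≤ y) (hc : 0 < c)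
    (hu : ContinuousOn u (Icc x y)) (hu' : ContinuousOn u' (Icc x y))
    (hderiv : ∀ t ∈ Ioo x y, HasDerivAt u (u' t) t) :
    ∫ t in x..y, ‖u t‖ ^ 2 ≤ (y - x + c) ^ 2 / 2 * (‖u y‖ ^ 2 / c + ∫ t in x..y, ‖u' t‖ ^ 2) := by
  have hmaps : MapsTo (fun t ↦ y - t) (Icc 0 (y - x)) (Icc x y) := fun t ht ↦
    ⟨by linarith [ht.2], by linarith [ht.1]⟩
  have hreflect := integral_norm_sq_le_of_hasDerivAt (u := fun t ↦ u (y - t))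
    (u' := fun t ↦ -u' (y - t)) (sub_nonneg.2 hxy) hc
    (hu.comp (by fun_prop) hmaps) ((hu'.comp (by fun_prop) hmaps).neg)
    (fun t ht ↦ (hderiv (y - t) ⟨by linarith [ht.2], by linarith [ht.1]⟩).comp_const_sub y t)
  simpa only [norm_neg, sub_zero, sub_sub_cancel, integral_comp_sub_left
    (fun t ↦ ‖u t‖ ^ 2), integral_comp_sub_left (fun t ↦ ‖u' t‖ ^ 2)] using hreflect

theorem integral_norm_sq_le_of_hasDerivAt_Icc {b c : ℝ} (hb : 0 ≤ b) (hc : 0 < c)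
    (hu : ContinuousOn u (Icc 0 b)) (hu' : ContinuousOn u' (Icc 0 b))
    (hderiv : ∀ t ∈ Ioo 0 b, HasDerivAt u (u' t) t) :
    ∫ t in 0..b, ‖u t‖ ^ 2 ≤
      (b / 2 + c) ^ 2 / 2 * ((‖u 0‖ ^ 2 + ‖u b‖ ^ 2) / c + ∫ t in 0..b, ‖u' t‖ ^ 2) := by
  have hleft : Icc 0 (b / 2) ⊆ Icc 0 b := Icc_subset_Icc_right (by linarith)
  have hright : Icc (b / 2) b ⊆ Icc 0 b := Icc_subset_Icc_left (by linarith)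
  have hL := integral_norm_sq_le_of_hasDerivAt (by linarith) hc (hu.mono hleft) (hu'.mono hleft)
    fun t ht ↦ hderiv t ⟨ht.1, by linarith [ht.2]⟩
  have hR := integral_norm_sq_le_of_hasDerivAt_rev (by linarith) hc (hu.mono hright)
    (hu'.mono hright) fun t ht ↦ hderiv t ⟨by linarith [ht.1], ht.2⟩
  rw [sub_half] at hR
  rw [← integral_add_adjacent_intervals (f := fun t ↦ ‖u t‖ ^ 2)
      (((hu.mono hleft).norm.pow 2).intervalIntegrable_of_Icc (by linarith))
      (((hu.mono hright).norm.pow 2).intervalIntegrable_of_Icc (by linarith)),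
    ← integral_add_adjacent_intervals (f := fun t ↦ ‖u' t‖ ^ 2)
      (((hu'.mono hleft).norm.pow 2).intervalIntegrable_of_Icc (by linarith))
      (((hu'.mono hright).norm.pow 2).intervalIntegrable_of_Icc (by linarith)), add_div]
  linarith

end

theorem robin_spectral_lower_bound (b σ : ℝ) (hb : 0 < b) (hσ : 0 < σ) (u : ℝ → ℂ)
    (hu : ContDiffOn ℝ 1 u (Set.Icc 0 b)) :
    (∫ t in (0:ℝ)..b, ‖deriv u t‖ ^ 2) + σ * ‖u 0‖ ^ 2 + σ * ‖u b‖ ^ 2 ≥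
      (1 / 2) * ((b / 2 + 1 / (2 * σ)) ^ 2)⁻¹ * ∫ t in (0:ℝ)..b, ‖u t‖ ^ 2 := by
  -- `deriv u` need not be continuous up to the endpoints; `derivWithin` is.
  set u' := derivWithin u (Icc 0 b)
  have hderiv : ∀ t ∈ Ioo 0 b, HasDerivAt u (u' t) t := fun t ht ↦
    ((hu.differentiableOn one_ne_zero t (Ioo_subset_Icc_self ht)).hasDerivWithinAt).hasDerivAt
      (Icc_mem_nhds ht.1 ht.2)
  have hbound := integral_norm_sq_le_of_hasDerivAt_Icc (c := 1 / (2 * σ)) hb.le (by positivity)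
    hu.continuousOn (hu.continuousOn_derivWithin (uniqueDiffOn_Icc hb) le_rfl) hderiv
  have hderiv_eq : ∫ t in 0..b, ‖deriv u t‖ ^ 2 = ∫ t in 0..b, ‖u' t‖ ^ 2 :=
    integral_congr_Ioo_of_le hb.le fun t ht ↦ by rw [(hderiv t ht).deriv]
  have hI : 0 ≤ ∫ t in 0..b, ‖u' t‖ ^ 2 := integral_nonneg hb.le fun _ _ ↦ sq_nonneg _
  set K := (b / 2 + 1 / (2 * σ)) ^ 2
  have hK : 0 < K := by positivity
  rw [div_div_eq_mul_div, div_one] at hbound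
  rw [ge_iff_le, hderiv_eq]
  calc 1 / 2 * K⁻¹ * ∫ t in 0..b, ‖u t‖ ^ 2
      ≤ 1 / 2 * K⁻¹ * (K / 2 * ((‖u 0‖ ^ 2 + ‖u b‖ ^ 2) * (2 * σ) + ∫ t in 0..b, ‖u' t‖ ^ 2)) := by
        gcongr
    _ = (σ * ‖u 0‖ ^ 2 + σ * ‖u b‖ ^ 2) / 2 + (∫ t in 0..b, ‖u' t‖ ^ 2) / 4 := by
        field_simp
        ring
    _ ≤ _ := by linarith [mul_nonneg hσ.le (sq_nonneg ‖u 0‖), mul_nonneg hσ.le (sq_nonneg ‖u b‖)]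
end

section
/- Let b > 0, σ > 0 and set c = 1/4. For u_ε(t) = (b + 1/(2σ) − t)^{1/2}, the quantity ∫₀ᵇ |u'(t)|² dt + σ|u(b)|² − c∫₀ᵇ (b − t + 1/(2σ))⁻² |u(t)|² dt equals (1 − 4c)·(1/4)·log(1 + 2σb) + (bounded terms as b → ∞); consequently, if a constant c satisfies ∫₀ᵇ |u'|² dt + σ|u(b)|² ≥ c∫₀ᵇ (b − t + 1/(2σ))⁻²|u|² dt for all b > 0 and all u ∈ C¹([0,b]), then c ≤ 1/4. -/
/-!
Test the inequality with `u(t) = √(a - t)`, `a = b + s`, `s = 1 / (2σ)`. With `L = log (a / s)`,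
both `∫ |u'|²` and the Hardy integral are multiples of `∫ (a - t)⁻¹ = L`: the first is `L / 4`,
the second is `L`, while the Robin term `σ u(b)² = σ s = 1/2` stays bounded. The inequality thus
reads `(c - 1/4) L ≤ 1/2`, and `L = log (1 + 2σb) → ∞` as `b → ∞` forces `c ≤ 1/4`.
-/

open Real Set Filter

section SqrtConstSub

variable {a b : ℝ}

theorem integral_inv_const_sub (ha : 0 < a) (hab : b < a) :
    ∫ t in (0:ℝ)..b, (a - t)⁻¹ = log (a / (a - b)) := by
  rw [intervalIntegral.integral_comp_sub_left (fun x => x⁻¹), sub_zero,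
    integral_inv_of_pos (sub_pos.mpr hab) ha]

theorem uIcc_zero_subset_Iio (ha : 0 < a) (hab : b < a) : uIcc 0 b ⊆ Iio a := fun _ ht =>
  lt_of_le_of_lt ht.2 (max_lt ha hab)

theorem contDiffOn_sqrt_const_sub {n : WithTop ℕ∞} :
    ContDiffOn ℝ n (fun t => √(a - t)) (Iio a) :=
  (contDiffOn_const.sub contDiffOn_id).sqrt fun _ ht => (sub_pos.mpr ht).ne'

theorem sq_abs_deriv_sqrt_const_sub {t : ℝ} (ht : t < a) :
    |deriv (fun t => √(a - t)) t| ^ 2 = (a - t)⁻¹ / 4 := by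
  have hpos : 0 < a - t := sub_pos.mpr ht
  have hderiv : HasDerivAt (fun t => √(a - t)) (-1 / (2 * √(a - t))) t :=
    ((hasDerivAt_id t).const_sub a).sqrt hpos.ne'
  rw [hderiv.deriv, sq_abs, div_pow, mul_pow, sq_sqrt hpos.le]
  field_simp
  norm_num

theorem inv_sq_mul_sq_abs_sqrt {x : ℝ} (hx : 0 ≤ x) : (x ^ 2)⁻¹ * |√x| ^ 2 = x⁻¹ := by
  rw [sq_abs, sq_sqrt hx]
  rcases eq_or_ne x 0 with rfl | hx0 <;> field_simp

theorem integral_sq_abs_deriv_sqrt_const_sub (ha : 0 < a) (hab : b < a) :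
    ∫ t in (0:ℝ)..b, |deriv (fun t => √(a - t)) t| ^ 2 = log (a / (a - b)) / 4 := by
  rw [intervalIntegral.integral_congr fun t ht =>
      sq_abs_deriv_sqrt_const_sub (uIcc_zero_subset_Iio ha hab ht),
    intervalIntegral.integral_div, integral_inv_const_sub ha hab]

theorem integral_inv_sq_mul_sq_abs_sqrt_const_sub (ha : 0 < a) (hab : b < a) :
    ∫ t in (0:ℝ)..b, ((a - t) ^ 2)⁻¹ * |√(a - t)| ^ 2 = log (a / (a - b)) := by
  rw [intervalIntegral.integral_congr fun t ht =>
      inv_sq_mul_sq_abs_sqrt (sub_nonneg.mpr (uIcc_zero_subset_Iio ha hab ht).le),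
    integral_inv_const_sub ha hab]

end SqrtConstSub

theorem nonpos_of_eventually_mul_le_of_tendsto_atTop {α : Type*} {l : Filter α} [l.NeBot]
    {f : α → ℝ} {κ C : ℝ} (hf : Tendsto f l atTop) (h : ∀ᶠ x in l, κ * f x ≤ C) : κ ≤ 0 := by
  by_contra! hκ
  obtain ⟨x, hle, hgt⟩ := (h.and ((hf.const_mul_atTop hκ).eventually_gt_atTop C)).exists
  exact hle.not_gt hgt

theorem tendsto_log_add_div_atTop {s : ℝ} (hs : 0 < s) :
    Tendsto (fun b => log ((b + s) / s)) atTop atTop :=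
  tendsto_log_atTop.comp ((tendsto_atTop_add_const_right _ s tendsto_id).atTop_div_const hs)

theorem sharpness_of_one_quarter (σ c : ℝ) (hσ : 0 < σ)
    (h : ∀ b : ℝ, 0 < b → ∀ u : ℝ → ℝ, ContDiffOn ℝ 1 u (Set.Icc 0 b) →
      (∫ t in (0:ℝ)..b, |deriv u t| ^ 2) + σ * |u b| ^ 2 ≥
        c * ∫ t in (0:ℝ)..b, ((b - t + 1 / (2 * σ)) ^ 2)⁻¹ * |u t| ^ 2) :
    c ≤ 1 / 4 := by
  set s := 1 / (2 * σ)
  have hs : 0 < s := by positivity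
  have key : ∀ b : ℝ, 0 < b → (c - 1 / 4) * log ((b + s) / s) ≤ 1 / 2 := by
    intro b hb
    have hab : b < b + s := lt_add_of_pos_right b hs
    have ha : 0 < b + s := hb.trans hab
    have hu := h b hb (fun t => √(b + s - t))
      (contDiffOn_sqrt_const_sub.mono fun t ht => lt_of_le_of_lt ht.2 hab)
    have hweight : ∀ t, b - t + s = b + s - t := fun t => by ring
    simp only [hweight] at hu
    rw [integral_sq_abs_deriv_sqrt_const_sub ha hab,
      integral_inv_sq_mul_sq_abs_sqrt_const_sub ha hab, add_sub_cancel_left,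
      sq_abs, sq_sqrt hs.le] at hu
    have hσs : σ * s = 1 / 2 := by simp only [s]; field_simp
    linarith
  exact sub_nonpos.mp <| nonpos_of_eventually_mul_le_of_tendsto_atTop
    (tendsto_log_add_div_atTop hs) ((eventually_gt_atTop 0).mono key)
end

section
/- Let b > 0 and u ∈ C¹([0,b], ℂ). For every ε > 0, with f(t) = −(t + ε)⁻¹, one has ∫₀ᵇ |u'(t)|² dt + (f(b) − f(0))/2 · |u(0)|² ≥ (1/2)∫₀ᵇ (t+ε)⁻²|u(t)|² dt − (1/4)∫₀ᵇ ((t+ε)⁻¹ − (b+ε)⁻¹)² |u(t)|² dt, and the right-hand side equals (1/4)∫₀ᵇ [(t+ε)⁻² + 2(t+ε)⁻¹(b+ε)⁻¹ − (b+ε)⁻²] |u(t)|² dt. -/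
open MeasureTheory intervalIntegral Set
open scoped InnerProductSpace

lemma amgm_aux (G I U V : ℝ) (h2 : -(|G| * (U * V)) ≤ G * I) :
    0 ≤ G * (2 * I) + (2 * V ^ 2 + G ^ 2 * U ^ 2 / 2) := by
  have h3 : |G| ^ 2 * U ^ 2 = G ^ 2 * U ^ 2 := by rw [sq_abs]
  nlinarith [sq_nonneg (2 * V - |G| * U), h3]

theorem explicit_computation (b ε : ℝ) (hb : 0 < b) (hε : 0 < ε) (u : ℝ → ℂ)
    (hu : ContDiffOn ℝ 1 u (Set.Icc 0 b)) :
    ((∫ t in (0:ℝ)..b, ‖deriv u t‖ ^ 2) + (1 / ε - 1 / (b + ε)) / 2 * ‖u 0‖ ^ 2 ≥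
      (1 / 2) * (∫ t in (0:ℝ)..b, ((t + ε) ^ 2)⁻¹ * ‖u t‖ ^ 2)
        - (1 / 4) * ∫ t in (0:ℝ)..b, ((t + ε)⁻¹ - (b + ε)⁻¹) ^ 2 * ‖u t‖ ^ 2) ∧
    (1 / 2) * (∫ t in (0:ℝ)..b, ((t + ε) ^ 2)⁻¹ * ‖u t‖ ^ 2)
        - (1 / 4) * (∫ t in (0:ℝ)..b, ((t + ε)⁻¹ - (b + ε)⁻¹) ^ 2 * ‖u t‖ ^ 2)
      = (1 / 4) * ∫ t in (0:ℝ)..b,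
          (((t + ε) ^ 2)⁻¹ + 2 * (t + ε)⁻¹ * (b + ε)⁻¹ - ((b + ε) ^ 2)⁻¹) * ‖u t‖ ^ 2 := by
  have huIcc : uIcc (0:ℝ) b = Icc 0 b := uIcc_of_le hb.le
  have hne : ∀ t ∈ Icc (0:ℝ) b, t + ε ≠ 0 := fun t ht => by
    have := ht.1; positivity
  have hbε : b + ε ≠ 0 := by positivity
  have hcu : ContinuousOn u (Icc 0 b) := hu.continuousOn
  set v : ℝ → ℂ := derivWithin u (Icc 0 b) with hv_def
  have hcv : ContinuousOn v (Icc 0 b) :=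
    hu.continuousOn_derivWithin (uniqueDiffOn_Icc hb) le_rfl
  set g : ℝ → ℝ := fun t => (b + ε)⁻¹ - (t + ε)⁻¹ with hg_def
  have hcg : ContinuousOn g (Icc 0 b) :=
    continuousOn_const.sub ((continuousOn_id.add continuousOn_const).inv₀ hne)
  -- integrability helpers
  have int_f1 : IntervalIntegrable (fun t => ((t + ε) ^ 2)⁻¹ * ‖u t‖ ^ 2) volume 0 b := by
    apply ContinuousOn.intervalIntegrable
    rw [huIcc]
    exact (((continuousOn_id.add continuousOn_const).pow 2).inv₀
      (fun t ht => pow_ne_zero 2 (hne t ht))).mul ((hcu.norm).pow 2)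
  have int_g2 : IntervalIntegrable (fun t => (g t) ^ 2 * ‖u t‖ ^ 2) volume 0 b := by
    apply ContinuousOn.intervalIntegrable
    rw [huIcc]
    exact (hcg.pow 2).mul ((hcu.norm).pow 2)
  have int_v : IntervalIntegrable (fun t => ‖v t‖ ^ 2) volume 0 b := by
    apply ContinuousOn.intervalIntegrable
    rw [huIcc]
    exact (hcv.norm).pow 2
  -- common rewriting of the squared-difference integrand
  have e_g2 : (∫ t in (0:ℝ)..b, ((t + ε)⁻¹ - (b + ε)⁻¹) ^ 2 * ‖u t‖ ^ 2)
      = ∫ t in (0:ℝ)..b, (g t) ^ 2 * ‖u t‖ ^ 2 := by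
    apply intervalIntegral.integral_congr
    intro x _
    simp only [hg_def]
    ring
  constructor
  · -- main inequality
    -- derivative of u at interior points
    have hud : ∀ x ∈ Ioo (0:ℝ) b, HasDerivAt u (v x) x := by
      intro x hx
      exact (((hu.differentiableOn one_ne_zero) x (Ioo_subset_Icc_self hx)).hasDerivWithinAt).hasDerivAt
        (Icc_mem_nhds hx.1 hx.2)
    have int_deriv_eq : (∫ t in (0:ℝ)..b, ‖deriv u t‖ ^ 2) = ∫ t in (0:ℝ)..b, ‖v t‖ ^ 2 := by
      apply intervalIntegral.integral_congr_ae
      filter_upwards [compl_mem_ae_iff.mpr (Real.volume_singleton (a := b))] with x hx hxI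
      rw [Set.uIoc_of_le hb.le] at hxI
      rw [(hud x ⟨hxI.1, lt_of_le_of_ne hxI.2 hx⟩).deriv]
    -- the function in the FTC
    set D : ℝ → ℝ := fun x => ((x + ε) ^ 2)⁻¹ * ‖u x‖ ^ 2 + g x * (2 * ⟪u x, v x⟫_ℝ) with hD_def
    have int_D : IntervalIntegrable D volume 0 b := by
      apply ContinuousOn.intervalIntegrable
      rw [huIcc]
      apply ContinuousOn.add
      · exact (((continuousOn_id.add continuousOn_const).pow 2).inv₀
          (fun t ht => pow_ne_zero 2 (hne t ht))).mul ((hcu.norm).pow 2)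
      · exact hcg.mul (continuousOn_const.mul (hcu.inner hcv))
    have hFTC : (∫ x in (0:ℝ)..b, D x) = (1 / ε - 1 / (b + ε)) * ‖u 0‖ ^ 2 := by
      have hH : ∀ x ∈ Ioo (0:ℝ) b, HasDerivAt (fun t => g t * ‖u t‖ ^ 2) (D x) x := by
        intro x hx
        have hxI : x ∈ Icc (0:ℝ) b := Ioo_subset_Icc_self hx
        have hg' : HasDerivAt g (((x + ε) ^ 2)⁻¹) x := by
          have h1 : HasDerivAt (fun t : ℝ => (t + ε)⁻¹) (-1 / (x + ε) ^ 2) x :=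
            ((hasDerivAt_id x).add_const ε).inv (hne x hxI)
          have := h1.const_sub ((b + ε)⁻¹)
          refine this.congr_deriv ?_
          ring
        have hN : HasDerivAt (fun t => ⟪u t, u t⟫_ℝ)
            (⟪u x, v x⟫_ℝ + ⟪v x, u x⟫_ℝ) x := (hud x hx).inner ℝ (hud x hx)
        have hH' := hg'.mul hN
        have heq : (fun t => g t * ‖u t‖ ^ 2) = fun t => g t * ⟪u t, u t⟫_ℝ := by
          funext t; rw [real_inner_self_eq_norm_sq]
        rw [heq]
        refine hH'.congr_deriv ?_
        rw [hD_def]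
        simp only [real_inner_self_eq_norm_sq]
        rw [real_inner_comm (v x) (u x)]
        ring
      have hcH : ContinuousOn (fun t => g t * ‖u t‖ ^ 2) (Icc 0 b) :=
        hcg.mul ((hcu.norm).pow 2)
      have := intervalIntegral.integral_eq_sub_of_hasDerivAt_of_le hb.le hcH hH int_D
      rw [this]
      have hgb : g b = 0 := by simp [hg_def]
      rw [hgb]
      simp only [hg_def, one_div]
      ring
    -- pointwise bound and monotonicity
    set F : ℝ → ℝ := fun x => D x + (2 * ‖v x‖ ^ 2 + (g x) ^ 2 * ‖u x‖ ^ 2 / 2) with hF_def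
    have int_F : IntervalIntegrable F volume 0 b :=
      int_D.add ((int_v.const_mul 2).add (int_g2.div_const 2))
    have key : ∀ x ∈ Icc (0:ℝ) b, ((x + ε) ^ 2)⁻¹ * ‖u x‖ ^ 2 ≤ F x := by
      intro x _
      simp only [hF_def, hD_def]
      have habs : |g x * ⟪u x, v x⟫_ℝ| ≤ |g x| * (‖u x‖ * ‖v x‖) := by
        rw [abs_mul]
        exact mul_le_mul_of_nonneg_left (abs_real_inner_le_norm _ _) (abs_nonneg _)
      have h2 : -(|g x| * (‖u x‖ * ‖v x‖)) ≤ g x * ⟪u x, v x⟫_ℝ := by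
        have := neg_abs_le (g x * ⟪u x, v x⟫_ℝ)
        linarith
      have h4 := amgm_aux (g x) (⟪u x, v x⟫_ℝ) (‖u x‖) (‖v x‖) h2
      linarith
    have hmono := intervalIntegral.integral_mono_on hb.le int_f1 int_F key
    have hsplit : (∫ x in (0:ℝ)..b, F x) = (∫ x in (0:ℝ)..b, D x)
        + (2 * (∫ x in (0:ℝ)..b, ‖v x‖ ^ 2)
          + (∫ x in (0:ℝ)..b, (g x) ^ 2 * ‖u x‖ ^ 2) / 2) := by
      rw [hF_def]
      rw [intervalIntegral.integral_add int_D ((int_v.const_mul 2).add (int_g2.div_const 2))]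
      rw [intervalIntegral.integral_add (int_v.const_mul 2) (int_g2.div_const 2)]
      rw [intervalIntegral.integral_const_mul, intervalIntegral.integral_div]
    rw [e_g2, int_deriv_eq]
    rw [hsplit, hFTC] at hmono
    linarith
  · -- algebraic identity
    have e3 : (∫ t in (0:ℝ)..b,
          (((t + ε) ^ 2)⁻¹ + 2 * (t + ε)⁻¹ * (b + ε)⁻¹ - ((b + ε) ^ 2)⁻¹) * ‖u t‖ ^ 2)
        = ∫ t in (0:ℝ)..b,
          (2 * (((t + ε) ^ 2)⁻¹ * ‖u t‖ ^ 2) - (g t) ^ 2 * ‖u t‖ ^ 2) := by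
      apply intervalIntegral.integral_congr
      intro x _
      simp only [hg_def, ← inv_pow]
      ring
    rw [e_g2, e3, intervalIntegral.integral_sub (int_f1.const_mul 2) int_g2,
      intervalIntegral.integral_const_mul]
    ring
end
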